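/- arXiv:1409.3440 — 3 statements merged into one kernel-verified Lean document; each statement's English description precedes it below -/
import Mathlib

section
/- Let g : ℕ → ℕ be defined by g(i) := (3^{(i+1)/2} − 1)^2 if i is odd and g(i) := (3^{i/2} − 1)(3^{(i+2)/2} − 1) if i is even. Then for all natural numbers n and i with 2i ≤ n − 5, one has 2·g(i) + 1 ≤ (√3)^{n−1}·(√3 − 1) in ℝ. (This is the sufficient condition 2g + 1 ≤ q^{(n−1)/2}(√q − 1), with q = 3, guaranteeing the existence of a place of degree n.) -/
/-- The genus of the `i`-th step of the Garcia–Stichtenoth tower over `F_9`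
(equivalently, of its descent to `F_3`). -/
def genusGS3 (i : ℕ) : ℕ :=
  if Odd i then (3 ^ ((i + 1) / 2) - 1) ^ 2
  else (3 ^ (i / 2) - 1) * (3 ^ ((i + 2) / 2) - 1)

lemma genusGS3_bound (i : ℕ) : 2 * genusGS3 i + 1 ≤ 2 * 3 ^ (i + 1) := by
  unfold genusGS3
  rcases Nat.even_or_odd i with he | ho
  · rw [if_neg (Nat.not_odd_iff_even.mpr he)]
    obtain ⟨k, rfl⟩ := he
    have h1 : (k + k) / 2 = k := by omega
    have h2 : (k + k + 2) / 2 = k + 1 := by omega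
    rw [h1, h2]
    obtain ⟨y, hy⟩ : ∃ y, 3 ^ k = y + 1 := ⟨3 ^ k - 1, by
      have := Nat.one_le_pow k 3 (by norm_num); omega⟩
    have h3 : 3 ^ (k + 1) = 3 * y + 3 := by rw [pow_succ, hy]; ring
    have h4 : 3 ^ (k + k + 1) = 3 * (y + 1) ^ 2 := by
      rw [show k + k + 1 = (k + 1) + k by ring, pow_add, h3, hy]; ring
    rw [hy, h3, h4, show 3 * y + 3 - 1 = 3 * y + 2 by omega]
    simp only [Nat.add_sub_cancel]
    nlinarith [Nat.zero_le y]
  · rw [if_pos ho]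
    obtain ⟨k, rfl⟩ := ho
    have h1 : (2 * k + 1 + 1) / 2 = k + 1 := by omega
    rw [h1]
    obtain ⟨y, hy⟩ : ∃ y, 3 ^ (k + 1) = y + 1 := ⟨3 ^ (k + 1) - 1, by
      have := Nat.one_le_pow (k + 1) 3 (by norm_num); omega⟩
    have h4 : 3 ^ (2 * k + 1 + 1) = (y + 1) ^ 2 := by
      rw [show 2 * k + 1 + 1 = (k + 1) + (k + 1) by ring, pow_add, hy]; ring
    rw [hy, h4]
    simp only [Nat.add_sub_cancel]
    nlinarith [Nat.zero_le y]

/-- For all naturals `n, i` with `2i ≤ n − 5`,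
`2·g(i) + 1 ≤ (√3)^{n−1}·(√3 − 1)` in `ℝ`. -/
theorem genusGS3_place_condition (n i : ℕ) (h : (2 * i : ℤ) ≤ (n : ℤ) - 5) :
    2 * (genusGS3 i : ℝ) + 1 ≤ Real.sqrt 3 ^ (n - 1) * (Real.sqrt 3 - 1) := by
  set s := Real.sqrt 3 with hs
  have hs0 : 0 ≤ s := Real.sqrt_nonneg 3
  have hs2 : s ^ 2 = 3 := Real.sq_sqrt (by norm_num)
  have hs53 : (5 : ℝ) / 3 ≤ s := by nlinarith
  have hs1 : (1 : ℝ) ≤ s := by linarith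
  have hn : 2 * i + 4 ≤ n - 1 := by omega
  have key : 2 * (genusGS3 i : ℝ) + 1 ≤ 2 * 3 ^ (i + 1) := by
    have := genusGS3_bound i
    calc 2 * (genusGS3 i : ℝ) + 1 = ((2 * genusGS3 i + 1 : ℕ) : ℝ) := by push_cast; ring
      _ ≤ ((2 * 3 ^ (i + 1) : ℕ) : ℝ) := by exact_mod_cast this
      _ = 2 * 3 ^ (i + 1) := by push_cast; ring
  have step1 : (2 : ℝ) * 3 ^ (i + 1) ≤ 3 ^ (i + 2) * (s - 1) := by
    have : (3 : ℝ) ^ (i + 2) = 3 * 3 ^ (i + 1) := by rw [pow_succ]; ring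
    rw [this]
    have hp : (0 : ℝ) ≤ 3 ^ (i + 1) := by positivity
    nlinarith
  have step2 : (3 : ℝ) ^ (i + 2) ≤ s ^ (n - 1) := by
    calc (3 : ℝ) ^ (i + 2) = (s ^ 2) ^ (i + 2) := by rw [hs2]
      _ = s ^ (2 * i + 4) := by rw [← pow_mul]; ring_nf
      _ ≤ s ^ (n - 1) := pow_le_pow_right₀ hs1 hn
  have hsm1 : (0 : ℝ) ≤ s - 1 := by linarith
  calc 2 * (genusGS3 i : ℝ) + 1 ≤ 2 * 3 ^ (i + 1) := key
    _ ≤ 3 ^ (i + 2) * (s - 1) := step1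
    _ ≤ s ^ (n - 1) * (s - 1) := by
        exact mul_le_mul_of_nonneg_right step2 hsm1
end

section
/- For all natural numbers n, i, s with 4i ≤ n − 13 and s ≤ 1, the following inequality holds in ℝ: 2·((2^s/4)·(4^{i+2} − 2·4·2^i) + 2^s/4) + 1 ≤ (√2)^{n−1}·(√2 − 1). (Here 2^{s−2} is written as 2^s/4, 4^{i/2+1} = 4·2^i, and 2^{(n−1)/2} denotes (√2)^{n−1}.) -/
/-- For all naturals `n, i, s` with `4i ≤ n − 13` and `s ≤ 1`, in `ℝ`:
`2·((2^s/4)·(4^{i+2} − 2·4·2^i) + 2^s/4) + 1 ≤ (√2)^{n−1}·(√2 − 1)`. -/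
theorem condition_a_F2 (n i s : ℕ) (hi : (4 * i : ℤ) ≤ (n : ℤ) - 13) (hs : s ≤ 1) :
    2 * (((2 : ℝ) ^ s / 4) * ((4 : ℝ) ^ (i + 2) - 2 * 4 * 2 ^ i) + (2 : ℝ) ^ s / 4) + 1 ≤
      Real.sqrt 2 ^ (n - 1) * (Real.sqrt 2 - 1) := by
  have hn : 4 * i + 12 ≤ n - 1 := by omega
  have s2 : Real.sqrt 2 ^ 2 = 2 := Real.sq_sqrt (by norm_num)
  have hnn := Real.sqrt_nonneg 2
  have h1 : (1.4 : ℝ) ≤ Real.sqrt 2 := by nlinarith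
  have h1' : (1 : ℝ) ≤ Real.sqrt 2 := by linarith
  have hpow : Real.sqrt 2 ^ (4 * i + 12) ≤ Real.sqrt 2 ^ (n - 1) :=
    pow_le_pow_right₀ h1' hn
  have heq : Real.sqrt 2 ^ (4 * i + 12) = 2 ^ (2 * i + 6) := by
    rw [show 4 * i + 12 = 2 * (2 * i + 6) by ring, pow_mul, s2]
  have h2s : (2 : ℝ) ^ s ≤ 2 := by
    calc (2 : ℝ) ^ s ≤ 2 ^ 1 := pow_le_pow_right₀ (by norm_num) hs
    _ = 2 := pow_one 2
  have hi1 : (1 : ℝ) ≤ 2 ^ i := one_le_pow₀ (by norm_num)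
  have e4 : (4 : ℝ) ^ i = (2 ^ i) ^ 2 := by
    rw [← pow_mul, mul_comm i 2, pow_mul]; norm_num
  have e42 : (4 : ℝ) ^ (i + 2) = 16 * (2 ^ i) ^ 2 := by rw [pow_add, e4]; ring
  have e26 : (2 : ℝ) ^ (2 * i + 6) = 64 * (2 ^ i) ^ 2 := by
    rw [pow_add, pow_mul, show ((2:ℝ))^2 = 4 by norm_num, e4]; ring
  have hRHS : 64 * ((2:ℝ) ^ i) ^ 2 * (Real.sqrt 2 - 1) ≤
      Real.sqrt 2 ^ (n - 1) * (Real.sqrt 2 - 1) := by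
    apply mul_le_mul_of_nonneg_right _ (by linarith)
    rw [← e26, ← heq]; exact hpow
  have h2s0 : (0 : ℝ) ≤ 2 ^ s := by positivity
  nlinarith [sq_nonneg ((2:ℝ) ^ i), sq_nonneg ((2:ℝ) ^ i - 1),
    mul_le_mul_of_nonneg_right h2s (show (0:ℝ) ≤ (2:ℝ)^i * ((2:ℝ)^i - 1) by nlinarith)]
end

section
/- For all natural numbers n, i, s with s ≤ 1 and 2·4^i ≥ n + 1, the following inequality holds in ℝ: (4^2 − 4)·4^i·2^s ≥ 2n + 2·(2^s/4)·(4^{i+2} − 4·2^i) + 2·(2^s/4) − 1. -/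
/-- For all naturals `n, i, s` with `s ≤ 1` and `2·4^i ≥ n + 1`, in `ℝ`:
`(4² − 4)·4^i·2^s ≥ 2n + 2·(2^s/4)·(4^{i+2} − 4·2^i) + 2·(2^s/4) − 1`. -/
theorem condition_c_F2 (n i s : ℕ) (hs : s ≤ 1) (hi : 2 * 4 ^ i ≥ n + 1) :
    ((4 : ℝ) ^ 2 - 4) * 4 ^ i * 2 ^ s ≥
      2 * (n : ℝ) + 2 * ((2 : ℝ) ^ s / 4) * ((4 : ℝ) ^ (i + 2) - 4 * 2 ^ i) +
        2 * ((2 : ℝ) ^ s / 4) - 1 := by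
  have hn : (n : ℝ) ≤ 2 * 4 ^ i - 1 := by
    have : (n : ℝ) + 1 ≤ 2 * 4 ^ i := by exact_mod_cast hi
    linarith
  have h1 : (1 : ℝ) ≤ (2 : ℝ) ^ i := one_le_pow₀ (by norm_num)
  have h2 : (1 : ℝ) ≤ (4 : ℝ) ^ i := one_le_pow₀ (by norm_num)
  have h3 : (1 : ℝ) ≤ (2 : ℝ) ^ s := one_le_pow₀ (by norm_num)
  have h4 : (2 : ℝ) ^ s ≤ 2 := by
    calc (2 : ℝ) ^ s ≤ 2 ^ 1 := pow_le_pow_right₀ (by norm_num) hs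
    _ = 2 := by norm_num
  rw [pow_add]
  nlinarith [mul_le_mul_of_nonneg_left h3 (by positivity : (0:ℝ) ≤ 4 * 4 ^ i),
    mul_le_mul_of_nonneg_right h4 (by positivity : (0:ℝ) ≤ 2 ^ i)]
end
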